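/- arXiv:1801.07347 — 5 statements merged into one kernel-verified Lean document; each statement's English description precedes it below -/
import Mathlib

section
/- Full-Duplex Transceiver mode probability (Theorem 1, eq. (6)): the probability that a uniformly chosen user's requested content is cached by some other user while at least one other user requests the content it caches equals (1/N)·Σ_{κ=1}^{N} (P_hit−ρ_κ)(1−(1−ρ_κ)^{N−1}). Precisely, (1/N)·Σ_{κ=1}^{N} P( X_κ ≤ N, X_κ ≠ κ, and X_μ = κ for some μ ≠ κ ) = (1/N)·Σ_{κ=1}^{N} (P_hit−ρ_κ)(1−(1−ρ_κ)^{N−1}). -/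
/-!
For user `κ` the event is `{X_κ ∈ {1,…,N} \ {κ}} ∩ {X_μ = κ for some μ ≠ κ}`. Its complement
inside `{X_κ ∈ {1,…,N} \ {κ}}` is `{X_κ ∈ {1,…,N} \ {κ}} ∩ ⋂_{μ ≠ κ} {X_μ ≠ κ}`, an intersection
of independent events, of probability `(P_hit - ρ_κ) (1 - ρ_κ)^(N-1)`.
-/

open MeasureTheory ProbabilityTheory Finset

namespace ProbabilityTheory

variable {Ω ι β : Type*} [MeasurableSpace Ω] [MeasurableSpace β] {P : Measure Ω}
  [Fintype ι] {f : ι → Ω → β}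

lemma iIndepFun.measureReal_iInter_preimage (hf : iIndepFun f P) {S : ι → Set β}
    (hS : ∀ i, MeasurableSet (S i)) :
    P.real (⋂ i, f i ⁻¹' S i) = ∏ i, P.real (f i ⁻¹' S i) := by
  rw [measureReal_def, hf.meas_iInter fun i => ⟨S i, hS i, rfl⟩, ENNReal.toReal_prod]
  rfl

variable [IsProbabilityMeasure P] [DecidableEq ι] [MeasurableSingletonClass β]

lemma iIndepFun.measureReal_preimage_inter_exists_eq (hf : iIndepFun f P)
    (hmeas : ∀ i, Measurable (f i)) (k : ι) {A : Set β} (hA : MeasurableSet A) (b : β) :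
    P.real (f k ⁻¹' A ∩ {ω | ∃ i ≠ k, f i ω = b}) =
      P.real (f k ⁻¹' A) * (1 - ∏ i ∈ univ.erase k, (1 - P.real (f i ⁻¹' {b}))) := by
  set S : ι → Set β := Function.update (fun _ => {b}ᶜ) k A
  have hSk : S k = A := Function.update_self ..
  have hS_ne : ∀ i ≠ k, S i = {b}ᶜ := fun i hi => Function.update_of_ne hi ..
  have hS : ∀ i, MeasurableSet (S i) := fun i => by
    rcases eq_or_ne i k with rfl | hi
    · rwa [hSk]
    · rw [hS_ne i hi]; exact (measurableSet_singleton b).compl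
  have hB : {ω | ∃ i ≠ k, f i ω = b} = ⋃ i ∈ univ.erase k, f i ⁻¹' {b} := by
    ext ω; simp
  have hdiff : f k ⁻¹' A \ {ω | ∃ i ≠ k, f i ω = b} = ⋂ i, f i ⁻¹' S i := by
    ext ω
    simp only [Set.mem_sdiff, Set.mem_preimage, Set.mem_ofPred_eq, Set.mem_iInter, not_exists,
      not_and]
    constructor
    · rintro ⟨hA, hb⟩ i
      rcases eq_or_ne i k with rfl | hi
      · rwa [hSk]
      · rw [hS_ne i hi]; exact hb i hi
    · intro h
      refine ⟨hSk ▸ h k, fun i hi => ?_⟩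
      simpa [hS_ne i hi] using h i
  have hsplit := measureReal_inter_add_sdiff (μ := P) (s := f k ⁻¹' A)
    (hB ▸ Finset.measurableSet_biUnion _ fun i _ => hmeas i (measurableSet_singleton b))
  rw [hdiff, hf.measureReal_iInter_preimage hS, ← mul_prod_erase _ _ (mem_univ k), hSk,
    prod_congr rfl fun i hi => by rw [hS_ne i (ne_of_mem_erase hi), Set.preimage_compl,
      probReal_compl_eq_one_sub (hmeas i (measurableSet_singleton b))]] at hsplit
  linarith

end ProbabilityTheory

lemma Fin.exists_ne_and_iff_exists_mem_Icc {N : ℕ} (k : Fin N) (p : ℕ → Prop) :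
    (∃ i : Fin N, i ≠ k ∧ p (i.val + 1)) ↔ ∃ μ ∈ Icc 1 N, μ ≠ k.val + 1 ∧ p μ := by
  constructor
  · rintro ⟨i, hik, hp⟩
    exact ⟨i.val + 1, by simp, fun h => hik (Fin.ext (by omega)), hp⟩
  · rintro ⟨μ, hμ, hμk, hp⟩
    obtain ⟨hμ1, hμN⟩ := mem_Icc.mp hμ
    exact ⟨⟨μ - 1, by omega⟩, fun h => hμk (by rw [← h, Fin.val_mk]; omega),
      by rwa [Nat.sub_add_cancel hμ1]⟩

theorem FDTR_mode_probability_general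
    {Ω : Type*} [MeasurableSpace Ω] (P : Measure Ω) [IsProbabilityMeasure P]
    (N m : ℕ) (hm : N ≤ m)
    (X : ℕ → Ω → ℕ) (ρ : ℕ → ℝ)
    (hmeas : ∀ μ, Measurable (X μ))
    (hrange : ∀ μ ∈ Finset.Icc 1 N, ∀ ω, X μ ω ∈ Finset.Icc 1 m)
    (hindep : iIndepFun
      (fun i : Fin N => X (i.val + 1)) P)
    (hdist : ∀ μ ∈ Finset.Icc 1 N, ∀ ℓ ∈ Finset.Icc 1 m,
      P {ω | X μ ω = ℓ} = ENNReal.ofReal (ρ ℓ))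
    (hρ : ∀ ℓ ∈ Finset.Icc 1 m, 0 ≤ ρ ℓ) :
    (1 / N : ℝ) * ∑ κ ∈ Finset.Icc 1 N,
        (P {ω | X κ ω ≤ N ∧ X κ ω ≠ κ ∧ (∃ μ ∈ Finset.Icc 1 N, μ ≠ κ ∧ X μ ω = κ)}).toReal
      = (1 / N : ℝ) * ∑ κ ∈ Finset.Icc 1 N, ((∑ j ∈ Finset.Icc 1 N, ρ j) - ρ κ) * (1 - (1 - ρ κ) ^ (N - 1)) := by
  have hpmf : ∀ μ ∈ Icc 1 N, ∀ ℓ ∈ Icc 1 N, P.real (X μ ⁻¹' {ℓ}) = ρ ℓ := fun μ hμ ℓ hℓ => by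
    have hℓm : ℓ ∈ Icc 1 m := Icc_subset_Icc_right hm hℓ
    exact (congrArg ENNReal.toReal (hdist μ hμ ℓ hℓm)).trans (ENNReal.toReal_ofReal (hρ ℓ hℓm))
  congr 1
  refine sum_congr rfl fun κ hκ => ?_
  obtain ⟨hκ1, hκN⟩ := mem_Icc.mp hκ
  set k : Fin N := ⟨κ - 1, by omega⟩
  have hk : k.val + 1 = κ := Nat.sub_add_cancel hκ1
  have hevent : {ω | X κ ω ≤ N ∧ X κ ω ≠ κ ∧ ∃ μ ∈ Icc 1 N, μ ≠ κ ∧ X μ ω = κ} =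
      X (k.val + 1) ⁻¹' ↑((Icc 1 N).erase κ) ∩ {ω | ∃ i ≠ k, X (i.val + 1) ω = κ} := by
    ext ω
    have h1 := (mem_Icc.mp (hrange κ hκ ω)).1
    simp [Fin.exists_ne_and_iff_exists_mem_Icc k (X · ω = κ), hk, h1, and_assoc]
  have hhit : P.real (X κ ⁻¹' ↑((Icc 1 N).erase κ)) = ∑ j ∈ Icc 1 N, ρ j - ρ κ := by
    rw [← sum_measureReal_preimage_singleton _ fun j _ => hmeas κ (measurableSet_singleton j),
      sum_congr rfl fun j hj => hpmf κ hκ j (mem_of_mem_erase hj), sum_erase_eq_sub hκ]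
  rw [← measureReal_def, hevent, hindep.measureReal_preimage_inter_exists_eq (fun i => hmeas _) k
      (Set.toFinite _).measurableSet κ, hk, hhit,
    prod_congr rfl fun i _ => by rw [hpmf _ (by simp) κ hκ], prod_const,
    card_erase_of_mem (mem_univ k), card_univ, Fintype.card_fin]

/-- Theorem 1, eq. (6): Full-Duplex Transceiver mode probability. -/
theorem FDTR_mode_probability
    {Ω : Type*} [MeasurableSpace Ω] (P : Measure Ω) [IsProbabilityMeasure P]
    (N m : ℕ) (hN : 1 ≤ N) (hm : N ≤ m)
    (X : ℕ → Ω → ℕ) (ρ : ℕ → ℝ)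
    (hmeas : ∀ μ, Measurable (X μ))
    (hrange : ∀ μ ∈ Finset.Icc 1 N, ∀ ω, X μ ω ∈ Finset.Icc 1 m)
    (hindep : iIndepFun
      (fun i : Fin N => X (i.val + 1)) P)
    (hdist : ∀ μ ∈ Finset.Icc 1 N, ∀ ℓ ∈ Finset.Icc 1 m,
      P {ω | X μ ω = ℓ} = ENNReal.ofReal (ρ ℓ))
    (hρ : ∀ ℓ ∈ Finset.Icc 1 m, 0 ≤ ρ ℓ)
    (hρsum : ∑ ℓ ∈ Finset.Icc 1 m, ρ ℓ = 1) :
    (1 / N : ℝ) * ∑ κ ∈ Finset.Icc 1 N,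
        (P {ω | X κ ω ≤ N ∧ X κ ω ≠ κ ∧ (∃ μ ∈ Finset.Icc 1 N, μ ≠ κ ∧ X μ ω = κ)}).toReal
      = (1 / N : ℝ) * ∑ κ ∈ Finset.Icc 1 N, ((∑ j ∈ Finset.Icc 1 N, ρ j) - ρ κ) * (1 - (1 - ρ κ) ^ (N - 1)) :=
  FDTR_mode_probability_general P N m hm X ρ hmeas hrange hindep hdist hρ
end

section
/- Three-Node Full-Duplex mode probability (Theorem 1, eq. (8)): the probability that a uniformly chosen user's requested content is cached by another user (its serving node), at least one further user requests the content it caches, and the serving node itself does not request its content, equals (1/N)·Σ_{κ=1}^{N} (P_hit−ρ_κ)(1−ρ_κ−(1−ρ_κ)^{N−1}). Precisely, (1/N)·Σ_{κ=1}^{N} P( X_κ ≤ N, X_κ ≠ κ, X_{X_κ} ≠ κ, and X_μ = κ for some μ ≠ κ ) = (1/N)·Σ_{κ=1}^{N} (P_hit−ρ_κ)(1−ρ_κ−(1−ρ_κ)^{N−1}). -/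
/-!
Fix the user `κ`. On the event in question `κ` requests the content `j` of some other user
`j ≠ κ`, so the probability splits as a sum over `j`. Given `X κ = j`, the remaining conditions say
that `X j ≠ κ` and that some user other than `κ` requests `κ`: this is the event
`{X κ = j, X j ≠ κ}` minus the event that in addition no user other than `κ` requests `κ`.
By independence these have probabilities `ρ j (1 - ρ κ)` and `ρ j (1 - ρ κ) ^ (N - 1)`, and summing
over `j ≠ κ` produces the factor `P_hit - ρ κ`.
-/

open MeasureTheory ProbabilityTheory Finset

theorem measureReal_eq_sum_preimage_singleton_inter {α β : Type*} [MeasurableSpace α]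
    [MeasurableSpace β] [MeasurableSingletonClass β] {μ : Measure α} [IsFiniteMeasure μ]
    {f : α → β} (hf : Measurable f) {t : Finset β} {E : Set α} (hE : E ⊆ f ⁻¹' t) :
    μ.real E = ∑ b ∈ t, μ.real (f ⁻¹' {b} ∩ E) := by
  calc μ.real E = (μ.restrict E).real (f ⁻¹' t) := by
        rw [measureReal_restrict_apply (hf t.measurableSet), Set.inter_eq_right.2 hE]
    _ = ∑ b ∈ t, μ.real (f ⁻¹' {b} ∩ E) := by
        rw [← sum_measureReal_preimage_singleton t fun b _ => hf (measurableSet_singleton b)]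
        exact sum_congr rfl fun b _ => measureReal_restrict_apply (hf (measurableSet_singleton b))

theorem ProbabilityTheory.iIndepFun.measureReal_biInter_preimage_of_succ {Ω β : Type*}
    [MeasurableSpace Ω] [MeasurableSpace β] {P : Measure Ω} {N : ℕ} {X : ℕ → Ω → β}
    (h : iIndepFun (fun i : Fin N => X (i.val + 1)) P) {s : Finset ℕ} (hs : s ⊆ Icc 1 N)
    {g : ℕ → Set β} (hg : ∀ i, MeasurableSet (g i)) :
    P.real (⋂ i ∈ s, X i ⁻¹' g i) = ∏ i ∈ s, P.real (X i ⁻¹' g i) := by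
  set t : Finset (Fin N) := univ.filter fun i => i.val + 1 ∈ s
  have hst : s = t.image fun i => i.val + 1 := by
    ext i
    simp only [t, mem_image, mem_filter, mem_univ, true_and]
    constructor
    · intro hi
      have := mem_Icc.1 (hs hi)
      exact ⟨⟨i - 1, by omega⟩, by simpa [Nat.sub_add_cancel this.1] using hi, by simp; omega⟩
    · rintro ⟨j, hj, rfl⟩
      exact hj
  have hinj : Set.InjOn (fun i : Fin N => i.val + 1) t := fun i _ j _ hij => by
    simpa [Fin.ext_iff] using hij
  rw [hst, set_biInter_finset_image, prod_image hinj, measureReal_def,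
    h.meas_biInter fun i _ => ⟨g (i.val + 1), hg _, rfl⟩, ENNReal.toReal_prod]
  rfl

section ThreeNodeFullDuplex

variable {Ω : Type*} {N : ℕ} {X : ℕ → Ω → ℕ}

def threeNodeFullDuplexEvent (N : ℕ) (X : ℕ → Ω → ℕ) (κ : ℕ) : Set Ω :=
  {ω | X κ ω ≤ N ∧ X κ ω ≠ κ ∧ X (X κ ω) ω ≠ κ ∧ (∃ μ ∈ Icc 1 N, μ ≠ κ ∧ X μ ω = κ)}

def cacheUnrequestedEvent (X : ℕ → Ω → ℕ) (s : Finset ℕ) (κ j : ℕ) : Set Ω :=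
  {ω | X κ ω = j ∧ ∀ i ∈ s, i ≠ κ → X i ω ≠ κ}

theorem cacheUnrequestedEvent_anti {s t : Finset ℕ} (hst : s ⊆ t) (κ j : ℕ) :
    cacheUnrequestedEvent X t κ j ⊆ cacheUnrequestedEvent X s κ j :=
  fun _ ⟨hκ, ht⟩ => ⟨hκ, fun i hi => ht i (hst hi)⟩

theorem cacheUnrequestedEvent_eq_biInter {s : Finset ℕ} {κ : ℕ} (hκ : κ ∈ s) (j : ℕ) :
    cacheUnrequestedEvent X s κ j =
      ⋂ i ∈ s, X i ⁻¹' Function.update (fun _ => ({κ}ᶜ : Set ℕ)) κ {j} i := by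
  ext ω
  simp only [cacheUnrequestedEvent, Set.mem_ofPred_eq, Set.mem_iInter, Set.mem_preimage]
  constructor
  · rintro ⟨hj, hs⟩ i hi
    by_cases hiκ : i = κ
    · subst hiκ; simpa using hj
    · simpa [Function.update_of_ne hiκ] using hs i hi hiκ
  · intro h
    exact ⟨by simpa using h κ hκ, fun i hi hiκ => by simpa [Function.update_of_ne hiκ] using h i hi⟩

theorem threeNodeFullDuplexEvent_inter_preimage {κ j : ℕ} (hj : j ∈ (Icc 1 N).erase κ) :
    X κ ⁻¹' {j} ∩ threeNodeFullDuplexEvent N X κ =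
      cacheUnrequestedEvent X {κ, j} κ j \ cacheUnrequestedEvent X (Icc 1 N) κ j := by
  obtain ⟨hjκ, hjN⟩ := mem_erase.1 hj
  ext ω
  simp only [threeNodeFullDuplexEvent, cacheUnrequestedEvent, Set.mem_inter_iff, Set.mem_preimage,
    Set.mem_singleton_iff, Set.mem_ofPred_eq, Set.mem_sdiff, mem_insert, mem_singleton]
  constructor
  · rintro ⟨rfl, -, -, hserve, μ, hμ, hμκ, hμ'⟩
    refine ⟨⟨rfl, fun i hi hiκ => ?_⟩, fun h => h.2 μ hμ hμκ hμ'⟩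
    rcases hi with rfl | rfl
    exacts [absurd rfl hiκ, hserve]
  · rintro ⟨⟨rfl, hpair⟩, hall⟩
    simp only [true_and, not_forall, not_not] at hall
    obtain ⟨μ, hμ, hμκ, hμ'⟩ := hall
    exact ⟨rfl, (mem_Icc.1 hjN).2, hjκ, hpair _ (Or.inr rfl) hjκ, μ, hμ, hμκ, hμ'⟩

variable [MeasurableSpace Ω] {P : Measure Ω}

theorem measurableSet_cacheUnrequestedEvent (hmeas : ∀ i, Measurable (X i)) {s : Finset ℕ}
    {κ : ℕ} (hκ : κ ∈ s) (j : ℕ) : MeasurableSet (cacheUnrequestedEvent X s κ j) := by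
  rw [cacheUnrequestedEvent_eq_biInter hκ]
  exact s.measurableSet_biInter fun i _ => hmeas i .of_discrete

theorem measureReal_cacheUnrequestedEvent [IsProbabilityMeasure P]
    (hmeas : ∀ i, Measurable (X i)) (hindep : iIndepFun (fun i : Fin N => X (i.val + 1)) P)
    {ρ : ℕ → ℝ} (hdist : ∀ i ∈ Icc 1 N, ∀ ℓ ∈ Icc 1 N, P.real (X i ⁻¹' {ℓ}) = ρ ℓ)
    {s : Finset ℕ} (hs : s ⊆ Icc 1 N) {κ j : ℕ} (hκ : κ ∈ s) (hj : j ∈ Icc 1 N) :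
    P.real (cacheUnrequestedEvent X s κ j) = ρ j * (1 - ρ κ) ^ (s.card - 1) := by
  have hother : ∀ i ∈ s.erase κ,
      P.real (X i ⁻¹' Function.update (fun _ => ({κ}ᶜ : Set ℕ)) κ {j} i) = 1 - ρ κ := by
    intro i hi
    rw [Function.update_of_ne (ne_of_mem_erase hi), Set.preimage_compl,
      probReal_compl_eq_one_sub (hmeas i .of_discrete),
      hdist i (hs (mem_of_mem_erase hi)) κ (hs hκ)]
  rw [cacheUnrequestedEvent_eq_biInter hκ,
    hindep.measureReal_biInter_preimage_of_succ hs fun _ => .of_discrete, ← mul_prod_erase s _ hκ,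
    Function.update_self, hdist κ (hs hκ) j hj, prod_congr rfl hother, prod_const,
    card_erase_of_mem hκ]

theorem measureReal_threeNodeFullDuplexEvent [IsProbabilityMeasure P]
    (hmeas : ∀ i, Measurable (X i)) (hindep : iIndepFun (fun i : Fin N => X (i.val + 1)) P)
    {ρ : ℕ → ℝ} (hdist : ∀ i ∈ Icc 1 N, ∀ ℓ ∈ Icc 1 N, P.real (X i ⁻¹' {ℓ}) = ρ ℓ)
    {κ : ℕ} (hκ : κ ∈ Icc 1 N) (hpos : ∀ ω, 0 < X κ ω) :
    P.real (threeNodeFullDuplexEvent N X κ) =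
      (∑ j ∈ Icc 1 N, ρ j - ρ κ) * (1 - ρ κ - (1 - ρ κ) ^ (N - 1)) := by
  have hsub : threeNodeFullDuplexEvent N X κ ⊆ X κ ⁻¹' ((Icc 1 N).erase κ) :=
    fun ω ⟨hN, hκ', _⟩ => by simpa [hκ'] using ⟨hpos ω, hN⟩
  have hfiber : ∀ j ∈ (Icc 1 N).erase κ,
      P.real (X κ ⁻¹' {j} ∩ threeNodeFullDuplexEvent N X κ) =
        ρ j * (1 - ρ κ - (1 - ρ κ) ^ (N - 1)) := fun j hj => by
    have hjN := mem_of_mem_erase hj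
    have hpair : {κ, j} ⊆ Icc 1 N := insert_subset hκ (singleton_subset_iff.2 hjN)
    rw [threeNodeFullDuplexEvent_inter_preimage hj,
      measureReal_sdiff (cacheUnrequestedEvent_anti hpair κ j)
        (measurableSet_cacheUnrequestedEvent hmeas hκ j),
      measureReal_cacheUnrequestedEvent hmeas hindep hdist hpair (mem_insert_self κ _) hjN,
      measureReal_cacheUnrequestedEvent hmeas hindep hdist subset_rfl hκ hjN,
      card_pair (ne_of_mem_erase hj).symm, Nat.card_Icc, Nat.add_sub_cancel]
    ring
  rw [measureReal_eq_sum_preimage_singleton_inter (hmeas κ) hsub, sum_congr rfl hfiber,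
    ← sum_mul, sum_erase_eq_sub hκ]

end ThreeNodeFullDuplex

theorem TNFD_mode_probability_general
    {Ω : Type*} [MeasurableSpace Ω] (P : Measure Ω) [IsProbabilityMeasure P]
    (N m : ℕ) (hm : N ≤ m)
    (X : ℕ → Ω → ℕ) (ρ : ℕ → ℝ)
    (hmeas : ∀ μ, Measurable (X μ))
    (hrange : ∀ μ ∈ Finset.Icc 1 N, ∀ ω, X μ ω ∈ Finset.Icc 1 m)
    (hindep : iIndepFun
      (fun i : Fin N => X (i.val + 1)) P)
    (hdist : ∀ μ ∈ Finset.Icc 1 N, ∀ ℓ ∈ Finset.Icc 1 m,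
      P {ω | X μ ω = ℓ} = ENNReal.ofReal (ρ ℓ))
    (hρ : ∀ ℓ ∈ Finset.Icc 1 m, 0 ≤ ρ ℓ) :
    (1 / N : ℝ) * ∑ κ ∈ Finset.Icc 1 N,
        (P {ω | X κ ω ≤ N ∧ X κ ω ≠ κ ∧ X (X κ ω) ω ≠ κ ∧ (∃ μ ∈ Finset.Icc 1 N, μ ≠ κ ∧ X μ ω = κ)}).toReal
      = (1 / N : ℝ) * ∑ κ ∈ Finset.Icc 1 N, ((∑ j ∈ Finset.Icc 1 N, ρ j) - ρ κ) * (1 - ρ κ - (1 - ρ κ) ^ (N - 1)) := by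
  have hdistReal : ∀ μ ∈ Icc 1 N, ∀ ℓ ∈ Icc 1 N, P.real (X μ ⁻¹' {ℓ}) = ρ ℓ := by
    intro μ hμ ℓ hℓ
    have hℓm : ℓ ∈ Icc 1 m := Icc_subset_Icc_right hm hℓ
    exact (congrArg ENNReal.toReal (hdist μ hμ ℓ hℓm)).trans (ENNReal.toReal_ofReal (hρ ℓ hℓm))
  congr 1
  exact sum_congr rfl fun κ hκ => measureReal_threeNodeFullDuplexEvent hmeas hindep hdistReal hκ
    fun ω => (mem_Icc.1 (hrange κ hκ ω)).1

/-- Theorem 1, eq. (8): Three-Node Full-Duplex mode probability. -/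
theorem TNFD_mode_probability
    {Ω : Type*} [MeasurableSpace Ω] (P : Measure Ω) [IsProbabilityMeasure P]
    (N m : ℕ) (hN : 1 ≤ N) (hm : N ≤ m)
    (X : ℕ → Ω → ℕ) (ρ : ℕ → ℝ)
    (hmeas : ∀ μ, Measurable (X μ))
    (hrange : ∀ μ ∈ Finset.Icc 1 N, ∀ ω, X μ ω ∈ Finset.Icc 1 m)
    (hindep : iIndepFun
      (fun i : Fin N => X (i.val + 1)) P)
    (hdist : ∀ μ ∈ Finset.Icc 1 N, ∀ ℓ ∈ Finset.Icc 1 m,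
      P {ω | X μ ω = ℓ} = ENNReal.ofReal (ρ ℓ))
    (hρ : ∀ ℓ ∈ Finset.Icc 1 m, 0 ≤ ρ ℓ)
    (hρsum : ∑ ℓ ∈ Finset.Icc 1 m, ρ ℓ = 1) :
    (1 / N : ℝ) * ∑ κ ∈ Finset.Icc 1 N,
        (P {ω | X κ ω ≤ N ∧ X κ ω ≠ κ ∧ X (X κ ω) ω ≠ κ ∧ (∃ μ ∈ Finset.Icc 1 N, μ ≠ κ ∧ X μ ω = κ)}).toReal
      = (1 / N : ℝ) * ∑ κ ∈ Finset.Icc 1 N, ((∑ j ∈ Finset.Icc 1 N, ρ j) - ρ κ) * (1 - ρ κ - (1 - ρ κ) ^ (N - 1)) :=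
  TNFD_mode_probability_general P N m hm X ρ hmeas hrange hindep hdist hρ
end

section
/- Half-Duplex Receiver mode probability (Theorem 1, eq. (9)): the probability that a uniformly chosen user's requested content is cached by some other user while no user requests the content it caches equals (1/N)·Σ_{κ=1}^{N} (P_hit−ρ_κ)(1−ρ_κ)^{N−1}. Precisely, (1/N)·Σ_{κ=1}^{N} P( X_κ ≤ N, X_κ ≠ κ, and X_μ ≠ κ for all μ ≠ κ ) = (1/N)·Σ_{κ=1}^{N} (P_hit−ρ_κ)(1−ρ_κ)^{N−1}. -/
/-!
Fix a cached content `κ ≤ N`. As requests are at least `1`, the event is the intersection over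
the users `μ` of `{X μ ∈ T μ}`, where `T κ = {1, …, N} \ {κ}` and `T μ = {κ}ᶜ` for `μ ≠ κ`.
Independence factorises its probability into `(P_hit - ρ κ) * (1 - ρ κ) ^ (N - 1)`, since
`P (X μ ≠ κ) = 1 - ρ κ` for each of the other `N - 1` users.
-/

open MeasureTheory ProbabilityTheory Finset

section

variable {Ω α : Type*} [MeasurableSpace Ω] [MeasurableSpace α] [MeasurableSingletonClass α]
  {P : Measure Ω} {X : Ω → α} {ρ : α → ℝ}

lemma measureReal_preimage_finset_eq_sum [IsFiniteMeasure P] (hX : Measurable X) {T : Finset α}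
    (hdist : ∀ ℓ ∈ T, P {ω | X ω = ℓ} = ENNReal.ofReal (ρ ℓ)) (hρ : ∀ ℓ ∈ T, 0 ≤ ρ ℓ) :
    P.real (X ⁻¹' T) = ∑ ℓ ∈ T, ρ ℓ := by
  rw [← sum_measureReal_preimage_singleton T fun ℓ _ => hX (measurableSet_singleton ℓ)]
  refine sum_congr rfl fun ℓ hℓ => ?_
  exact (congrArg ENNReal.toReal (hdist ℓ hℓ)).trans (ENNReal.toReal_ofReal (hρ ℓ hℓ))

lemma measureReal_ne_eq_one_sub [IsProbabilityMeasure P] (hX : Measurable X) {a : α} {r : ℝ}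
    (hdist : P {ω | X ω = a} = ENNReal.ofReal r) (hr : 0 ≤ r) :
    P.real {ω | X ω ≠ a} = 1 - r := by
  have hs : MeasurableSet {ω | X ω = a} := hX (measurableSet_singleton a)
  rw [← Set.compl_ofPred, probReal_compl_eq_one_sub hs, measureReal_def, hdist,
    ENNReal.toReal_ofReal hr]

end

lemma ProbabilityTheory.iIndepFun.measureReal_iInter_preimage_s5 {Ω ι : Type*} [MeasurableSpace Ω]
    [Fintype ι] {P : Measure Ω} {β : ι → Type*} [∀ i, MeasurableSpace (β i)]
    {f : ∀ i, Ω → β i} (hf : iIndepFun f P) {s : ∀ i, Set (β i)} (hs : ∀ i, MeasurableSet (s i)) :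
    P.real (⋂ i, f i ⁻¹' s i) = ∏ i, P.real (f i ⁻¹' s i) := by
  rw [measureReal_def, hf.meas_iInter fun i => ⟨s i, hs i, rfl⟩, ENNReal.toReal_prod]
  rfl

lemma iIndepFun_Icc_of_iIndepFun_fin {Ω β : Type*} [MeasurableSpace Ω] [MeasurableSpace β]
    {P : Measure Ω} {N : ℕ} {X : ℕ → Ω → β} (hX : iIndepFun (fun i : Fin N => X (i.val + 1)) P) :
    iIndepFun (fun μ : Icc 1 N => X μ) P := by
  have hpred : ∀ μ : Icc 1 N, (μ : ℕ) - 1 < N := fun μ => by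
    have := mem_Icc.mp μ.2
    omega
  have hinj : Function.Injective fun μ : Icc 1 N => (⟨μ - 1, hpred μ⟩ : Fin N) := by
    intro μ ν h
    have := mem_Icc.mp μ.2
    have := mem_Icc.mp ν.2
    ext
    simp only [Fin.mk.injEq] at h
    omega
  convert hX.precomp hinj with μ
  exact (Nat.sub_add_cancel (mem_Icc.mp μ.2).1).symm

def hdrxTarget (N κ : ℕ) : ℕ → Set ℕ :=
  Function.update (fun _ => {κ}ᶜ) κ ↑((Icc 1 N).erase κ)

lemma setOf_hdrx_eq_iInter_preimage {Ω : Type*} {X : ℕ → Ω → ℕ} {N κ : ℕ} (hκ : κ ∈ Icc 1 N)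
    (hpos : ∀ ω, 1 ≤ X κ ω) :
    {ω | X κ ω ≤ N ∧ X κ ω ≠ κ ∧ ∀ μ ∈ Icc 1 N, μ ≠ κ → X μ ω ≠ κ}
      = ⋂ μ : Icc 1 N, X μ ⁻¹' hdrxTarget N κ μ := by
  ext ω
  simp only [Set.mem_ofPred_eq, Set.mem_iInter, Set.mem_preimage, Subtype.forall, hdrxTarget]
  constructor
  · rintro ⟨hle, hne, hothers⟩ μ hμ
    rcases eq_or_ne μ κ with rfl | hμκ
    · simpa [hne] using ⟨hpos ω, hle⟩
    · simpa [hμκ] using hothers μ hμ hμκ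
  · intro h
    have hself := h κ hκ
    simp only [Function.update_self, coe_erase, coe_Icc, Set.mem_sdiff, Set.mem_Icc,
      Set.mem_singleton_iff] at hself
    refine ⟨hself.1.2, hself.2, fun μ hμ hμκ => ?_⟩
    simpa [hμκ] using h μ hμ

lemma measureReal_hdrx_event {Ω : Type*} [MeasurableSpace Ω] (P : Measure Ω)
    [IsProbabilityMeasure P] {N m κ : ℕ} (hκ : κ ∈ Icc 1 N) (hm : N ≤ m) {X : ℕ → Ω → ℕ}
    {ρ : ℕ → ℝ} (hmeas : ∀ μ, Measurable (X μ)) (hpos : ∀ ω, 1 ≤ X κ ω)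
    (hindep : iIndepFun (fun i : Fin N => X (i.val + 1)) P)
    (hdist : ∀ μ ∈ Icc 1 N, ∀ ℓ ∈ Icc 1 m, P {ω | X μ ω = ℓ} = ENNReal.ofReal (ρ ℓ))
    (hρ : ∀ ℓ ∈ Icc 1 m, 0 ≤ ρ ℓ) :
    P.real {ω | X κ ω ≤ N ∧ X κ ω ≠ κ ∧ ∀ μ ∈ Icc 1 N, μ ≠ κ → X μ ω ≠ κ}
      = ((∑ j ∈ Icc 1 N, ρ j) - ρ κ) * (1 - ρ κ) ^ (N - 1) := by
  have hNm : Icc 1 N ⊆ Icc 1 m := Icc_subset_Icc_right hm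
  rw [setOf_hdrx_eq_iInter_preimage hκ hpos,
    (iIndepFun_Icc_of_iIndepFun_fin hindep).measureReal_iInter_preimage_s5
      fun _ => MeasurableSet.of_discrete,
    prod_coe_sort (Icc 1 N) fun μ => P.real (X μ ⁻¹' hdrxTarget N κ μ), ← mul_prod_erase _ _ hκ]
  congr 1
  · have hsub : (Icc 1 N).erase κ ⊆ Icc 1 m := (erase_subset κ _).trans hNm
    rw [hdrxTarget, Function.update_self, measureReal_preimage_finset_eq_sum (hmeas κ)
      (fun ℓ hℓ => hdist κ hκ ℓ (hsub hℓ)) (fun ℓ hℓ => hρ ℓ (hsub hℓ)), sum_erase_eq_sub hκ]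
  · have hother : ∀ μ ∈ (Icc 1 N).erase κ, P.real (X μ ⁻¹' hdrxTarget N κ μ) = 1 - ρ κ := by
      intro μ hμ
      rw [hdrxTarget, Function.update_of_ne (ne_of_mem_erase hμ)]
      exact measureReal_ne_eq_one_sub (hmeas μ) (hdist μ (mem_of_mem_erase hμ) κ (hNm hκ))
        (hρ κ (hNm hκ))
    rw [prod_congr rfl hother, prod_const, card_erase_of_mem hκ, Nat.card_Icc, Nat.add_sub_cancel]

theorem HDRX_mode_probability_general
    {Ω : Type*} [MeasurableSpace Ω] (P : Measure Ω) [IsProbabilityMeasure P]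
    (N m : ℕ) (hm : N ≤ m)
    (X : ℕ → Ω → ℕ) (ρ : ℕ → ℝ)
    (hmeas : ∀ μ, Measurable (X μ))
    (hrange : ∀ μ ∈ Finset.Icc 1 N, ∀ ω, X μ ω ∈ Finset.Icc 1 m)
    (hindep : iIndepFun
      (fun i : Fin N => X (i.val + 1)) P)
    (hdist : ∀ μ ∈ Finset.Icc 1 N, ∀ ℓ ∈ Finset.Icc 1 m,
      P {ω | X μ ω = ℓ} = ENNReal.ofReal (ρ ℓ))
    (hρ : ∀ ℓ ∈ Finset.Icc 1 m, 0 ≤ ρ ℓ) :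
    (1 / N : ℝ) * ∑ κ ∈ Finset.Icc 1 N,
        (P {ω | X κ ω ≤ N ∧ X κ ω ≠ κ ∧ (∀ μ ∈ Finset.Icc 1 N, μ ≠ κ → X μ ω ≠ κ)}).toReal
      = (1 / N : ℝ) * ∑ κ ∈ Finset.Icc 1 N, ((∑ j ∈ Finset.Icc 1 N, ρ j) - ρ κ) * (1 - ρ κ) ^ (N - 1) := by
  congr 1
  exact sum_congr rfl fun κ hκ => measureReal_hdrx_event P hκ hm hmeas
    (fun ω => (mem_Icc.mp (hrange κ hκ ω)).1) hindep hdist hρ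

/-- Theorem 1, eq. (9): Half-Duplex Receiver mode probability. -/
theorem HDRX_mode_probability
    {Ω : Type*} [MeasurableSpace Ω] (P : Measure Ω) [IsProbabilityMeasure P]
    (N m : ℕ) (hN : 1 ≤ N) (hm : N ≤ m)
    (X : ℕ → Ω → ℕ) (ρ : ℕ → ℝ)
    (hmeas : ∀ μ, Measurable (X μ))
    (hrange : ∀ μ ∈ Finset.Icc 1 N, ∀ ω, X μ ω ∈ Finset.Icc 1 m)
    (hindep : iIndepFun
      (fun i : Fin N => X (i.val + 1)) P)
    (hdist : ∀ μ ∈ Finset.Icc 1 N, ∀ ℓ ∈ Finset.Icc 1 m,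
      P {ω | X μ ω = ℓ} = ENNReal.ofReal (ρ ℓ))
    (hρ : ∀ ℓ ∈ Finset.Icc 1 m, 0 ≤ ρ ℓ)
    (hρsum : ∑ ℓ ∈ Finset.Icc 1 m, ρ ℓ = 1) :
    (1 / N : ℝ) * ∑ κ ∈ Finset.Icc 1 N,
        (P {ω | X κ ω ≤ N ∧ X κ ω ≠ κ ∧ (∀ μ ∈ Finset.Icc 1 N, μ ≠ κ → X μ ω ≠ κ)}).toReal
      = (1 / N : ℝ) * ∑ κ ∈ Finset.Icc 1 N, ((∑ j ∈ Finset.Icc 1 N, ρ j) - ρ κ) * (1 - ρ κ) ^ (N - 1) :=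
  HDRX_mode_probability_general P N m hm X ρ hmeas hrange hindep hdist hρ
end

section
/- Half-Duplex Transmitter mode probability (Theorem 1, eq. (10)): the probability that a uniformly chosen user's requested content is cached by no user (including itself) while at least one other user requests the content it caches equals (1/N)·Σ_{κ=1}^{N} (1−P_hit)(1−(1−ρ_κ)^{N−1}). Precisely, (1/N)·Σ_{κ=1}^{N} P( X_κ > N and X_μ = κ for some μ ≠ κ ) = (1/N)·Σ_{κ=1}^{N} (1−P_hit)(1−(1−ρ_κ)^{N−1}). -/
open MeasureTheory ProbabilityTheory Finset

/-!
The event for user `κ` is `{X κ > N} \ ({X κ > N} ∩ {no other user requests κ})`. By independence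
the intersection has probability `(1 - P_hit) (1 - ρ κ) ^ (N - 1)`, and `{X κ > N}` alone has
probability `1 - P_hit`, which gives each summand separately.
-/

namespace ProbabilityTheory

variable {Ω ι α : Type*} [MeasurableSpace Ω] [MeasurableSpace α] {P : Measure Ω}
  [DecidableEq ι] {Y : ι → Ω → α}

lemma iIndepFun.measureReal_preimage_inter_biInter_preimage (hY : iIndepFun Y P) {i₀ : ι}
    {S : Finset ι} (hi₀ : i₀ ∉ S) {A B : Set α} (hA : MeasurableSet A) (hB : MeasurableSet B) :
    P.real (Y i₀ ⁻¹' A ∩ ⋂ i ∈ S, Y i ⁻¹' B) =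
      P.real (Y i₀ ⁻¹' A) * ∏ i ∈ S, P.real (Y i ⁻¹' B) := by
  have hsets : ∀ i ∈ S, (if i = i₀ then A else B) = B := fun i hi =>
    if_neg (ne_of_mem_of_not_mem hi hi₀)
  have key := hY.measure_inter_preimage_eq_mul (insert i₀ S)
    (sets := fun i => if i = i₀ then A else B) (fun i _ => by split_ifs <;> assumption)
  rw [set_biInter_insert, prod_insert hi₀, if_pos rfl,
    Set.iInter₂_congr (fun i hi => by rw [hsets i hi]),
    prod_congr rfl (fun i hi => by rw [hsets i hi])] at key
  simp only [measureReal_def, key, ENNReal.toReal_mul, ENNReal.toReal_prod]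

lemma iIndepFun.measureReal_preimage_inter_exists_preimage [Fintype ι] [IsProbabilityMeasure P] (hY : iIndepFun Y P)
    (hmeas : ∀ i, Measurable (Y i)) (i₀ : ι) {A B : Set α} (hA : MeasurableSet A)
    (hB : MeasurableSet B) :
    P.real {ω | Y i₀ ω ∈ A ∧ ∃ i ≠ i₀, Y i ω ∈ B} =
      P.real (Y i₀ ⁻¹' A) * (1 - ∏ i ∈ univ.erase i₀, (1 - P.real (Y i ⁻¹' B))) := by
  set avoidB := ⋂ i ∈ univ.erase i₀, Y i ⁻¹' Bᶜ
  have hevent : {ω | Y i₀ ω ∈ A ∧ ∃ i ≠ i₀, Y i ω ∈ B} = Y i₀ ⁻¹' A \ avoidB := by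
    ext ω
    simp [avoidB]
  have hsplit := measureReal_inter_add_sdiff (μ := P) (s := Y i₀ ⁻¹' A)
    (Finset.measurableSet_biInter _ fun i _ => hmeas i hB.compl : MeasurableSet avoidB)
  have hprod := hY.measureReal_preimage_inter_biInter_preimage (notMem_erase i₀ univ) hA hB.compl
  rw [prod_congr rfl fun i _ => by
    rw [Set.preimage_compl, probReal_compl_eq_one_sub (hmeas i hB)]] at hprod
  rw [hevent]
  linarith

lemma measureReal_preimage_finset_eq_sum {β : Type*} [MeasurableSpace β]
    [MeasurableSingletonClass β] [IsFiniteMeasure P] {f : Ω → β} (hf : Measurable f)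
    {S : Finset β} {ρ : β → ℝ} (hρ : ∀ ℓ ∈ S, P.real (f ⁻¹' {ℓ}) = ρ ℓ) :
    P.real (f ⁻¹' S) = ∑ ℓ ∈ S, ρ ℓ := by
  rw [← sum_measureReal_preimage_singleton S fun ℓ _ => hf (measurableSet_singleton ℓ)]
  exact sum_congr rfl hρ

lemma measureReal_preimage_Ioi_eq_one_sub_sum [IsProbabilityMeasure P] {f : Ω → ℕ}
    (hf : Measurable f) (hpos : ∀ ω, 1 ≤ f ω) {N : ℕ} {ρ : ℕ → ℝ}
    (hρ : ∀ ℓ ∈ Icc 1 N, P.real (f ⁻¹' {ℓ}) = ρ ℓ) :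
    P.real (f ⁻¹' Set.Ioi N) = 1 - ∑ ℓ ∈ Icc 1 N, ρ ℓ := by
  have hIic : f ⁻¹' Set.Iic N = f ⁻¹' ↑(Icc 1 N) := by
    ext ω
    have := hpos ω
    simp only [Set.mem_preimage, Set.mem_Iic, coe_Icc, Set.mem_Icc]
    omega
  rw [← Set.compl_Iic, Set.preimage_compl, probReal_compl_eq_one_sub (hf measurableSet_Iic), hIic,
    measureReal_preimage_finset_eq_sum hf hρ]

end ProbabilityTheory

lemma exists_mem_Icc_one_iff_exists_fin {N : ℕ} {p : ℕ → Prop} :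
    (∃ μ ∈ Icc 1 N, p μ) ↔ ∃ i : Fin N, p (i + 1) := by
  constructor
  · rintro ⟨μ, hμ, h⟩
    obtain ⟨h1, hN⟩ := mem_Icc.mp hμ
    exact ⟨⟨μ - 1, by omega⟩, by rwa [Nat.sub_add_cancel h1]⟩
  · rintro ⟨i, h⟩
    exact ⟨i + 1, mem_Icc.mpr ⟨by omega, i.isLt⟩, h⟩

theorem HDTX_mode_probability_general
    {Ω : Type*} [MeasurableSpace Ω] (P : Measure Ω) [IsProbabilityMeasure P]
    (N m : ℕ) (hm : N ≤ m)
    (X : ℕ → Ω → ℕ) (ρ : ℕ → ℝ)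
    (hmeas : ∀ μ, Measurable (X μ))
    (hrange : ∀ μ ∈ Finset.Icc 1 N, ∀ ω, X μ ω ∈ Finset.Icc 1 m)
    (hindep : iIndepFun
      (fun i : Fin N => X (i.val + 1)) P)
    (hdist : ∀ μ ∈ Finset.Icc 1 N, ∀ ℓ ∈ Finset.Icc 1 m,
      P {ω | X μ ω = ℓ} = ENNReal.ofReal (ρ ℓ))
    (hρ : ∀ ℓ ∈ Finset.Icc 1 m, 0 ≤ ρ ℓ) :
    (1 / N : ℝ) * ∑ κ ∈ Finset.Icc 1 N,
        (P {ω | N < X κ ω ∧ (∃ μ ∈ Finset.Icc 1 N, μ ≠ κ ∧ X μ ω = κ)}).toReal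
      = (1 / N : ℝ) * ∑ κ ∈ Finset.Icc 1 N, (1 - (∑ j ∈ Finset.Icc 1 N, ρ j)) * (1 - (1 - ρ κ) ^ (N - 1)) := by
  have hreal : ∀ μ ∈ Icc 1 N, ∀ ℓ ∈ Icc 1 N, P.real (X μ ⁻¹' {ℓ}) = ρ ℓ := fun μ hμ ℓ hℓ => by
    have hℓm := Icc_subset_Icc_right hm hℓ
    rw [measureReal_def, ← ENNReal.toReal_ofReal (hρ ℓ hℓm), ← hdist μ hμ ℓ hℓm]
    rfl
  congr 1
  refine sum_congr rfl fun κ hκ => ?_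
  obtain ⟨hκ1, hκN⟩ := mem_Icc.mp hκ
  set i₀ : Fin N := ⟨κ - 1, by omega⟩
  have hXκ : X (i₀.val + 1) = X κ := by congr 1; simp only [i₀]; omega
  have hevent : {ω | N < X κ ω ∧ ∃ μ ∈ Icc 1 N, μ ≠ κ ∧ X μ ω = κ} =
      {ω | X (i₀.val + 1) ω ∈ Set.Ioi N ∧ ∃ i ≠ i₀, X (i.val + 1) ω ∈ ({κ} : Set ℕ)} := by
    ext ω
    simp only [Set.mem_ofPred_eq, exists_mem_Icc_one_iff_exists_fin, hXκ, Set.mem_Ioi,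
      Set.mem_singleton_iff, ne_eq, i₀, Fin.ext_iff]
    grind
  have hmiss : P.real (X κ ⁻¹' Set.Ioi N) = 1 - ∑ j ∈ Icc 1 N, ρ j :=
    measureReal_preimage_Ioi_eq_one_sub_sum (hmeas κ) (fun ω => (mem_Icc.mp (hrange κ hκ ω)).1)
      (hreal κ hκ)
  show P.real _ = _
  rw [hevent, hindep.measureReal_preimage_inter_exists_preimage (fun i => hmeas _) i₀
    measurableSet_Ioi (measurableSet_singleton κ), hXκ, hmiss,
    prod_congr rfl fun i _ => by rw [hreal _ (mem_Icc.mpr ⟨by omega, i.isLt⟩) κ hκ],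
    prod_const, card_erase_of_mem (mem_univ _), card_univ, Fintype.card_fin]

/-- Theorem 1, eq. (10): Half-Duplex Transmitter mode probability. -/
theorem HDTX_mode_probability
    {Ω : Type*} [MeasurableSpace Ω] (P : Measure Ω) [IsProbabilityMeasure P]
    (N m : ℕ) (hN : 1 ≤ N) (hm : N ≤ m)
    (X : ℕ → Ω → ℕ) (ρ : ℕ → ℝ)
    (hmeas : ∀ μ, Measurable (X μ))
    (hrange : ∀ μ ∈ Finset.Icc 1 N, ∀ ω, X μ ω ∈ Finset.Icc 1 m)
    (hindep : iIndepFun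
      (fun i : Fin N => X (i.val + 1)) P)
    (hdist : ∀ μ ∈ Finset.Icc 1 N, ∀ ℓ ∈ Finset.Icc 1 m,
      P {ω | X μ ω = ℓ} = ENNReal.ofReal (ρ ℓ))
    (hρ : ∀ ℓ ∈ Finset.Icc 1 m, 0 ≤ ρ ℓ)
    (hρsum : ∑ ℓ ∈ Finset.Icc 1 m, ρ ℓ = 1) :
    (1 / N : ℝ) * ∑ κ ∈ Finset.Icc 1 N,
        (P {ω | N < X κ ω ∧ (∃ μ ∈ Finset.Icc 1 N, μ ≠ κ ∧ X μ ω = κ)}).toReal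
      = (1 / N : ℝ) * ∑ κ ∈ Finset.Icc 1 N, (1 - (∑ j ∈ Finset.Icc 1 N, ρ j)) * (1 - (1 - ρ κ) ^ (N - 1)) :=
  HDTX_mode_probability_general P N m hm X ρ hmeas hrange hindep hdist hρ
end

section
/- Lemma 1 (distance distribution from a uniform point in a disk): let Y be uniformly distributed on the closed disk of radius R > 0 centered at the origin in ℝ², and let x ∈ ℝ² with ‖x‖ = q, 0 < q ≤ R. Then the law of the random distance Z = ‖Y − x‖ is absolutely continuous with respect to Lebesgue measure on ℝ, with density f(z) = 2z/R² for 0 ≤ z ≤ R − q, f(z) = (2z/(πR²))·arccos( (z² + q² − R²)/(2qz) ) for R − q < z ≤ R + q, and f(z) = 0 otherwise. -/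
/-!
The point `w = x - Y` is uniform on `closedBall x R` and `‖Y - x‖ = ‖w‖`; a rotation taking `x`
to the positive real axis of `ℂ` turns this disk into `closedBall q R`. In polar coordinates
`w = r e^{iθ}` Lebesgue measure is `r dr dθ`, and `|r e^{iθ} - q| ≤ R` means
`cos θ ≥ (r² + q² - R²) / (2qr)`, an arc of angular length `2 arccos ((r² + q² - R²) / (2qr))`.
Hence `‖w‖` has density `2 r arccos (⋯) / (πR²)`; the `arccos` is `π` for `r ≤ R - q` and `0` for
`r > R + q`, which gives the three cases of the formula.
-/

open MeasureTheory Metric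

open Set Real Module ENNReal

theorem Real.Icc_inter_setOf_le_cos {c : ℝ} (hc : c ≤ 1) :
    Icc (-π) π ∩ {θ | c ≤ cos θ} = Icc (-arccos c) (arccos c) := by
  ext θ
  simp only [mem_inter_iff, mem_Icc, mem_ofPred_eq, ← abs_le]
  constructor
  · rintro ⟨hθ, hcθ⟩
    rw [← cos_abs] at hcθ
    simpa only [arccos_cos (abs_nonneg θ) hθ] using arccos_le_arccos hcθ
  · intro hθ
    refine ⟨hθ.trans (arccos_le_pi c), ?_⟩
    rw [← cos_abs]
    rcases le_or_gt (-1) c with hc' | hc'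
    · calc c = cos (arccos c) := (cos_arccos hc' hc).symm
        _ ≤ cos |θ| := cos_le_cos_of_nonneg_of_le_pi (abs_nonneg θ) (arccos_le_pi c) hθ
    · linarith [neg_one_le_cos |θ|]

theorem Real.volume_Ioo_inter_setOf_le_cos (c : ℝ) :
    volume (Ioo (-π) π ∩ {θ | c ≤ cos θ}) = ENNReal.ofReal (2 * arccos c) := by
  rcases le_or_gt c 1 with hc | hc
  · have hae : (Ioo (-π) π ∩ {θ | c ≤ cos θ} : Set ℝ) =ᵐ[volume]
        (Icc (-π) π ∩ {θ | c ≤ cos θ} : Set ℝ) :=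
      ae_eq_set_inter Ioo_ae_eq_Icc (ae_eq_refl _)
    rw [measure_congr hae, Icc_inter_setOf_le_cos hc, volume_Icc]
    ring_nf
  · have hempty : {θ | c ≤ cos θ} = ∅ :=
      eq_empty_of_forall_notMem fun θ hθ => (cos_le_one θ).not_gt (hc.trans_le hθ)
    rw [hempty, inter_empty, measure_empty, arccos_of_one_le hc.le, mul_zero, ofReal_zero]

namespace Complex

noncomputable def angularMeasure (s : Set ℂ) (r : ℝ) : ℝ≥0∞ :=
  volume (Ioo (-π) π ∩ {θ | Complex.polarCoord.symm (r, θ) ∈ s})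

@[fun_prop]
theorem measurable_polarCoord_symm : Measurable Complex.polarCoord.symm :=
  measurableEquivRealProd.symm.measurable.comp _root_.continuous_polarCoord_symm.measurable

theorem lintegral_Ioo_smul_indicator_polarCoord_symm {s : Set ℂ} (hs : MeasurableSet s)
    (B : Set ℝ) {r : ℝ} (hr : 0 < r) :
    ∫⁻ θ in Ioo (-π) π,
        ENNReal.ofReal r • ((‖·‖) ⁻¹' B ∩ s).indicator 1 (Complex.polarCoord.symm (r, θ)) =
      B.indicator (fun r => ENNReal.ofReal r * angularMeasure s r) r := by
  have hsr : MeasurableSet {θ | Complex.polarCoord.symm (r, θ) ∈ s} :=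
    hs.preimage (measurable_polarCoord_symm.comp measurable_prodMk_left)
  have hmem : ∀ θ, Complex.polarCoord.symm (r, θ) ∈ (‖·‖) ⁻¹' B ∩ s ↔
      r ∈ B ∧ θ ∈ {θ | Complex.polarCoord.symm (r, θ) ∈ s} := by
    intro θ
    rw [mem_inter_iff, mem_preimage, norm_polarCoord_symm, abs_of_pos hr, mem_ofPred_eq]
  by_cases hrB : r ∈ B
  · have hind : ∀ θ,
        ((‖·‖) ⁻¹' B ∩ s).indicator (1 : ℂ → ℝ≥0∞) (Complex.polarCoord.symm (r, θ)) =
          {θ | Complex.polarCoord.symm (r, θ) ∈ s}.indicator 1 θ := by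
      intro θ
      by_cases hθ : θ ∈ {θ | Complex.polarCoord.symm (r, θ) ∈ s}
      · rw [indicator_of_mem ((hmem θ).2 ⟨hrB, hθ⟩), indicator_of_mem hθ, Pi.one_apply,
          Pi.one_apply]
      · rw [indicator_of_notMem (fun h => hθ ((hmem θ).1 h).2), indicator_of_notMem hθ]
    simp only [hind, smul_eq_mul, indicator_of_mem hrB]
    rw [lintegral_const_mul' _ _ ENNReal.ofReal_ne_top, lintegral_indicator_one hsr,
      Measure.restrict_apply hsr, inter_comm, angularMeasure]
  · have hind : ∀ θ,
        ((‖·‖) ⁻¹' B ∩ s).indicator (1 : ℂ → ℝ≥0∞) (Complex.polarCoord.symm (r, θ)) = 0 :=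
      fun θ => indicator_of_notMem (fun h => hrB ((hmem θ).1 h).1) _
    simp only [hind, smul_zero, lintegral_zero, indicator_of_notMem hrB]

theorem map_norm_restrict_eq_withDensity {s : Set ℂ} (hs : MeasurableSet s) :
    (volume.restrict s).map (‖·‖) =
      volume.withDensity fun r => ENNReal.ofReal r * angularMeasure s r := by
  ext B hB
  have hnormB : MeasurableSet ((‖·‖) ⁻¹' B ∩ s : Set ℂ) := (measurable_norm hB).inter hs
  have hsupp : Function.support (B.indicator fun r => ENNReal.ofReal r * angularMeasure s r) ⊆
      Ioi 0 := by
    intro r hr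
    by_contra hr0
    exact hr (indicator_apply_eq_zero.mpr fun _ => by
      rw [ENNReal.ofReal_of_nonpos (not_lt.mp hr0), zero_mul])
  rw [Measure.map_apply measurable_norm hB, Measure.restrict_apply (measurable_norm hB),
    withDensity_apply _ hB, ← lintegral_indicator_one hnormB,
    ← Complex.lintegral_comp_polarCoord_symm, polarCoord_target, Measure.volume_eq_prod,
    setLIntegral_prod _ (by fun_prop),
    setLIntegral_congr_fun measurableSet_Ioi
      fun r hr => lintegral_Ioo_smul_indicator_polarCoord_symm hs B hr,
    setLIntegral_eq_of_support_subset hsupp, lintegral_indicator hB]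

theorem polarCoord_symm_mem_closedBall_iff {q r R : ℝ} (hq : 0 < q) (hr : 0 < r)
    (hR : 0 ≤ R) (θ : ℝ) :
    Complex.polarCoord.symm (r, θ) ∈ closedBall (q : ℂ) R ↔
      (r ^ 2 + q ^ 2 - R ^ 2) / (2 * q * r) ≤ Real.cos θ := by
  have hdist : dist (Complex.polarCoord.symm (r, θ)) q ^ 2 =
      r ^ 2 + q ^ 2 - 2 * q * r * Real.cos θ := by
    rw [dist_eq, Complex.sq_norm, normSq_apply]
    simp only [Complex.polarCoord_symm_apply, sub_re, sub_im, mul_re, mul_im, add_re, add_im,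
      ofReal_re, ofReal_im, I_re, I_im]
    linear_combination r ^ 2 * Real.sin_sq_add_cos_sq θ
  rw [mem_closedBall, ← sq_le_sq₀ dist_nonneg hR, hdist, div_le_iff₀ (by positivity)]
  constructor <;> intro h <;> linarith

theorem map_norm_restrict_closedBall {q R : ℝ} (hq : 0 < q) (hR : 0 ≤ R) :
    (volume.restrict (closedBall (q : ℂ) R)).map (‖·‖) = volume.withDensity fun r =>
      ENNReal.ofReal (2 * r * arccos ((r ^ 2 + q ^ 2 - R ^ 2) / (2 * q * r))) := by
  rw [map_norm_restrict_eq_withDensity measurableSet_closedBall]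
  congr 1
  funext r
  rcases le_or_gt r 0 with hr | hr
  · rw [ENNReal.ofReal_of_nonpos hr, zero_mul, ENNReal.ofReal_of_nonpos
      (mul_nonpos_of_nonpos_of_nonneg (by linarith) (arccos_nonneg _))]
  · simp only [angularMeasure, polarCoord_symm_mem_closedBall_iff hq hr hR,
      volume_Ioo_inter_setOf_le_cos, ← ENNReal.ofReal_mul hr.le]
    ring_nf

end Complex

section Isometry

variable {E F : Type*} [NormedAddCommGroup E] [MeasurableSpace E] [BorelSpace E]

theorem map_norm_sub_restrict_closedBall_zero (μ : Measure E) [μ.IsAddLeftInvariant]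
    [μ.IsNegInvariant] (x : E) (R : ℝ) :
    (μ.restrict (closedBall 0 R)).map (‖· - x‖) = (μ.restrict (closedBall x R)).map (‖·‖) := by
  have hsub := (Measure.measurePreserving_sub_left μ x).restrict_preimage
    (measurableSet_closedBall (x := (0 : E)) (ε := R))
  have hpre : (x - ·) ⁻¹' closedBall 0 R = closedBall x R := by
    ext v
    simp [dist_eq_norm, norm_sub_rev]
  rw [← hsub.map_eq, hpre, Measure.map_map (by fun_prop) (by fun_prop)]
  congr 1
  funext v
  simp

variable [InnerProductSpace ℝ E] [FiniteDimensional ℝ E]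

theorem LinearIsometryEquiv.map_norm_restrict_closedBall [NormedAddCommGroup F]
    [InnerProductSpace ℝ F] [FiniteDimensional ℝ F] [MeasurableSpace F] [BorelSpace F]
    (L : E ≃ₗᵢ[ℝ] F) (x : E) (R : ℝ) :
    (volume.restrict (closedBall (L x) R)).map (‖·‖) =
      (volume.restrict (closedBall x R)).map (‖·‖) := by
  have hL := L.measurePreserving.restrict_preimage (measurableSet_closedBall (x := L x) (ε := R))
  rw [L.preimage_closedBall, L.symm_apply_apply] at hL
  rw [← hL.map_eq, Measure.map_map (by fun_prop) L.continuous.measurable]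
  congr 1
  funext v
  exact L.norm_map v

theorem map_norm_restrict_closedBall_eq_complex (hE : finrank ℝ E = 2) (x : E) (R : ℝ) :
    (volume.restrict (closedBall x R)).map (‖·‖) =
      (volume.restrict (closedBall (‖x‖ : ℂ) R)).map (‖·‖) := by
  let L₀ : E ≃ₗᵢ[ℝ] ℂ := ((stdOrthonormalBasis ℝ E).reindex (finCongr hE)).repr.trans
    Complex.orthonormalBasisOneI.repr.symm
  let L : E ≃ₗᵢ[ℝ] ℂ := L₀.trans (ℝ ∙ (L₀ x - ‖x‖))ᗮ.reflection
  have hLx : L x = ‖x‖ := Submodule.reflection_sub (by simp)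
  rw [← hLx, L.map_norm_restrict_closedBall]

end Isometry

theorem ofReal_distance_density_eq {q R : ℝ} (hq : 0 < q) (hR : 0 < R) (z : ℝ) :
    ENNReal.ofReal (
        if 0 ≤ z ∧ z ≤ R - q then 2 * z / R ^ 2
        else if R - q < z ∧ z ≤ R + q then
          (2 * z / (π * R ^ 2)) * arccos ((z ^ 2 + q ^ 2 - R ^ 2) / (2 * q * z))
        else 0) =
      (ENNReal.ofReal (π * R ^ 2))⁻¹ *
        ENNReal.ofReal (2 * z * arccos ((z ^ 2 + q ^ 2 - R ^ 2) / (2 * q * z))) := by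
  have hπR : 0 < π * R ^ 2 := by positivity
  rw [← ofReal_inv_of_pos hπR, ← ofReal_mul (inv_nonneg.mpr hπR.le)]
  rcases le_or_gt z 0 with hz | hz
  · have hA := arccos_nonneg ((z ^ 2 + q ^ 2 - R ^ 2) / (2 * q * z))
    rw [ofReal_of_nonpos (mul_nonpos_of_nonneg_of_nonpos (by positivity)
      (mul_nonpos_of_nonpos_of_nonneg (by linarith) hA)), ofReal_of_nonpos]
    split_ifs with h₁ h₂
    · rw [le_antisymm hz h₁.1, mul_zero, zero_div]
    · exact mul_nonpos_of_nonpos_of_nonneg (div_nonpos_of_nonpos_of_nonneg (by linarith) hπR.le) hA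
    · exact le_rfl
  have h2qz : 0 < 2 * q * z := by positivity
  congr 1
  split_ifs with h₁ h₂
  · rw [arccos_of_le_neg_one ((div_le_iff₀ h2qz).2 (by nlinarith))]
    field_simp
  · ring
  · have hz' : R + q < z := by
      by_contra! h
      exact h₂ ⟨lt_of_not_ge fun h' => h₁ ⟨hz.le, h'⟩, h⟩
    rw [arccos_of_one_le ((le_div_iff₀ h2qz).2 (by nlinarith)), mul_zero, mul_zero]

theorem distance_pdf_uniform_disk_general
    {Ω : Type*} [MeasurableSpace Ω] (P : Measure Ω)
    (R : ℝ) (hR : 0 < R)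
    (Y : Ω → EuclideanSpace ℝ (Fin 2)) (hmeas_Y : Measurable Y)
    (hY : Measure.map Y P
      = (ENNReal.ofReal (Real.pi * R ^ 2))⁻¹ • volume.restrict (closedBall 0 R))
    (x : EuclideanSpace ℝ (Fin 2)) (q : ℝ) (hq : ‖x‖ = q) (hq0 : 0 < q) :
    Measure.map (fun ω => ‖Y ω - x‖) P
      = volume.withDensity (fun z => ENNReal.ofReal (
          if 0 ≤ z ∧ z ≤ R - q then 2 * z / R ^ 2
          else if R - q < z ∧ z ≤ R + q then
            (2 * z / (Real.pi * R ^ 2)) * Real.arccos ((z ^ 2 + q ^ 2 - R ^ 2) / (2 * q * z))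
          else 0)) := by
  calc P.map (fun ω => ‖Y ω - x‖) = (P.map Y).map (‖· - x‖) :=
        (Measure.map_map (g := (‖· - x‖)) (by fun_prop) hmeas_Y).symm
    _ = (ENNReal.ofReal (π * R ^ 2))⁻¹ •
          (volume.restrict (closedBall (q : ℂ) R)).map (‖·‖) := by
        rw [hY, Measure.map_smul, map_norm_sub_restrict_closedBall_zero,
          map_norm_restrict_closedBall_eq_complex finrank_euclideanSpace_fin, hq]
    _ = _ := by
        rw [Complex.map_norm_restrict_closedBall hq0 hR.le, ← withDensity_smul _ (by fun_prop)]
        congr 1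
        funext z
        exact (ofReal_distance_density_eq hq0 hR z).symm

/-- Lemma 1: if `Y` is uniform on the closed disk of radius `R > 0` centered at the origin
of `ℝ²` and `‖x‖ = q` with `0 < q ≤ R`, then the law of `Z = ‖Y − x‖` has density (w.r.t.
Lebesgue measure on `ℝ`) `2z/R²` on `[0, R − q]`,
`(2z/(πR²))·arccos((z² + q² − R²)/(2qz))` on `(R − q, R + q]`, and `0` otherwise. -/
theorem distance_pdf_uniform_disk
    {Ω : Type*} [MeasurableSpace Ω] (P : Measure Ω) [IsProbabilityMeasure P]
    (R : ℝ) (hR : 0 < R)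
    (Y : Ω → EuclideanSpace ℝ (Fin 2)) (hmeas_Y : Measurable Y)
    (hY : Measure.map Y P
      = (ENNReal.ofReal (Real.pi * R ^ 2))⁻¹ • volume.restrict (closedBall 0 R))
    (x : EuclideanSpace ℝ (Fin 2)) (q : ℝ) (hq : ‖x‖ = q) (hq0 : 0 < q) (hqR : q ≤ R) :
    Measure.map (fun ω => ‖Y ω - x‖) P
      = volume.withDensity (fun z => ENNReal.ofReal (
          if 0 ≤ z ∧ z ≤ R - q then 2 * z / R ^ 2
          else if R - q < z ∧ z ≤ R + q then
            (2 * z / (Real.pi * R ^ 2)) * Real.arccos ((z ^ 2 + q ^ 2 - R ^ 2) / (2 * q * z))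
          else 0)) :=
  distance_pdf_uniform_disk_general P R hR Y hmeas_Y hY x q hq hq0
end
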